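/- arXiv:0903.0460 — 6 statements merged into one kernel-verified Lean document; each statement's English description precedes it below -/
import Mathlib

section
/- The constraint X ≤_m Y is generalised arc-consistent (GAC) if and only if for every i < n, the value max(DX i) is consistent (as a value of DX i) and the value min(DY i) is consistent (as a value of DY i). -/
namespace MsetPaper

/-- The maximum element of a multiset of naturals (`0` for the empty multiset). -/
def mmax (s : Multiset ℕ) : ℕ := s.sup

/-- The strict multiset order `x <ₘ y` of the paper: either `x` is empty and `y` is not,
or both are nonempty and either `max x < max y`, or the maxima agree and the multisets
with one occurrence of the maximum removed are again strictly ordered. -/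
inductive MLt : Multiset ℕ → Multiset ℕ → Prop
  | empty {y : Multiset ℕ} : y ≠ 0 → MLt 0 y
  | maxLt {x y : Multiset ℕ} : x ≠ 0 → y ≠ 0 → mmax x < mmax y → MLt x y
  | maxEq {x y : Multiset ℕ} : x ≠ 0 → y ≠ 0 → mmax x = mmax y →
      MLt (x.erase (mmax x)) (y.erase (mmax y)) → MLt x y

/-- The (non-strict) multiset order `x ≤ₘ y`. -/
def MLe (x y : Multiset ℕ) : Prop := MLt x y ∨ x = y

/-- The multiset of values taken by a vector. -/
def msetOf {n : ℕ} (x : Fin n → ℕ) : Multiset ℕ := (List.ofFn x : List ℕ)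

/-- `(x, y)` is a satisfying assignment for the constraint `X ≤ₘ Y`. -/
def SatLe {n : ℕ} (DX DY : Fin n → Finset ℕ) (x y : Fin n → ℕ) : Prop :=
  (∀ i, x i ∈ DX i) ∧ (∀ i, y i ∈ DY i) ∧ MLe (msetOf x) (msetOf y)

/-- The value `v` is consistent for the variable `X i`. -/
def ConsX {n : ℕ} (DX DY : Fin n → Finset ℕ) (i : Fin n) (v : ℕ) : Prop :=
  ∃ x y, SatLe DX DY x y ∧ x i = v

/-- The value `v` is consistent for the variable `Y i`. -/
def ConsY {n : ℕ} (DX DY : Fin n → Finset ℕ) (i : Fin n) (v : ℕ) : Prop :=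
  ∃ x y, SatLe DX DY x y ∧ y i = v

/-- The constraint `X ≤ₘ Y` is generalised arc-consistent. -/
def GACLe {n : ℕ} (DX DY : Fin n → Finset ℕ) : Prop :=
  (∀ i, ∀ v ∈ DX i, ConsX DX DY i v) ∧ (∀ i, ∀ v ∈ DY i, ConsY DX DY i v)

lemma mmax_mem {s : Multiset ℕ} (h : s ≠ 0) : mmax s ∈ s := by
  induction s using Multiset.induction with
  | empty => exact absurd rfl h
  | cons a t ih =>
    rcases eq_or_ne t 0 with rfl | ht
    · simp [mmax]
    · rcases le_total a (mmax t) with hle | hle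
      · have : mmax (a ::ₘ t) = mmax t := by
          simp only [mmax, Multiset.sup_cons]; exact sup_eq_right.2 hle
        rw [this]
        exact Multiset.mem_cons_of_mem (ih ht)
      · have : mmax (a ::ₘ t) = a := by
          simp only [mmax, Multiset.sup_cons]; exact sup_eq_left.2 hle
        rw [this]; exact Multiset.mem_cons_self a t

lemma MLt.ne_zero_right {x y : Multiset ℕ} (h : MLt x y) : y ≠ 0 := by
  cases h with
  | empty h => exact h
  | maxLt _ h _ => exact h
  | maxEq _ h _ _ => exact h

lemma mlt_cons_lt : ∀ s : Multiset ℕ, ∀ a b : ℕ, a < b → MLt (a ::ₘ s) (b ::ₘ s) := by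
  intro s
  induction s using Multiset.strongInductionOn with
  | _ s IH =>
    intro a b hab
    rcases le_or_gt b (mmax s) with hb | hb
    · -- maxes both equal mmax s
      have hs : s ≠ 0 := by
        rintro rfl
        simp [mmax] at hb; omega
      have hm : mmax s ∈ s := mmax_mem hs
      have hma : mmax (a ::ₘ s) = mmax s := by
        simp only [mmax, Multiset.sup_cons]; exact sup_eq_right.2 (le_trans hab.le hb)
      have hmb : mmax (b ::ₘ s) = mmax s := by
        simp only [mmax, Multiset.sup_cons]; exact sup_eq_right.2 hb
      have hea : (a ::ₘ s).erase (mmax s) = a ::ₘ s.erase (mmax s) := by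
        apply Multiset.erase_cons_tail
        intro h; rw [← h] at hb; omega
      have heb : (b ::ₘ s).erase (mmax s) = b ::ₘ s.erase (mmax s) := by
        rcases eq_or_ne (mmax s) b with h | h
        · subst h
          rw [Multiset.erase_cons_head]
          exact (Multiset.cons_erase hm).symm
        · exact Multiset.erase_cons_tail _ (fun hh => h hh.symm)
      refine MLt.maxEq (by simp) (by simp) (hma.trans hmb.symm) ?_
      rw [hma, hmb, hea, heb]
      exact IH _ (Multiset.erase_lt.2 hm) a b hab
    · refine MLt.maxLt (by simp) (by simp) ?_
      have h1 : mmax (a ::ₘ s) = a ⊔ mmax s := by simp [mmax, Multiset.sup_cons]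
      have h2 : mmax (b ::ₘ s) = b := by
        simp only [mmax, Multiset.sup_cons]; exact sup_eq_left.2 hb.le
      rw [h1, h2]
      simp only [sup_lt_iff]
      exact ⟨hab, hb⟩

lemma mlt_trans : ∀ x y z : Multiset ℕ, MLt x y → MLt y z → MLt x z := by
  intro x
  induction x using Multiset.strongInductionOn with
  | _ x IH =>
    intro y z hxy hyz
    cases hxy with
    | empty hy => exact MLt.empty hyz.ne_zero_right
    | maxLt hx hy hlt =>
      cases hyz with
      | empty h => exact absurd rfl hy
      | maxLt _ hz hlt' => exact MLt.maxLt hx hz (hlt.trans hlt')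
      | maxEq _ hz heq _ => exact MLt.maxLt hx hz (heq ▸ hlt)
    | maxEq hx hy heq hrec =>
      cases hyz with
      | empty h => exact absurd rfl hy
      | maxLt _ hz hlt' => exact MLt.maxLt hx hz (heq ▸ hlt')
      | maxEq _ hz heq' hrec' =>
        refine MLt.maxEq hx hz (heq.trans heq') ?_
        exact IH _ (Multiset.erase_lt.2 (mmax_mem hx)) _ _ hrec hrec'

lemma mle_trans {x y z : Multiset ℕ} (h1 : MLe x y) (h2 : MLe y z) : MLe x z := by
  rcases h1 with h1 | rfl
  · rcases h2 with h2 | rfl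
    · exact Or.inl (mlt_trans _ _ _ h1 h2)
    · exact Or.inl h1
  · exact h2

lemma mle_cons_le {a b : ℕ} (h : a ≤ b) (s : Multiset ℕ) : MLe (a ::ₘ s) (b ::ₘ s) := by
  rcases eq_or_lt_of_le h with rfl | h
  · exact Or.inr rfl
  · exact Or.inl (mlt_cons_lt s a b h)

lemma msetOf_eq_map {n : ℕ} (x : Fin n → ℕ) :
    msetOf x = Multiset.map x (List.finRange n : List (Fin n)) := by
  simp [msetOf, List.ofFn_eq_map]

lemma mem_msetOf {n : ℕ} (x : Fin n → ℕ) (i : Fin n) : x i ∈ msetOf x := by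
  rw [msetOf_eq_map]
  exact Multiset.mem_map_of_mem x (by simp)

lemma msetOf_update {n : ℕ} (x : Fin n → ℕ) (i : Fin n) (v : ℕ) :
    msetOf (Function.update x i v) = v ::ₘ (msetOf x).erase (x i) := by
  rw [msetOf_eq_map, msetOf_eq_map]
  set m : Multiset (Fin n) := ((List.finRange n : List (Fin n)) : Multiset (Fin n)) with hm
  have hnd : m.Nodup := by simp [hm, List.nodup_finRange]
  have him : i ∈ m := by simp [hm]
  have hkey : ∀ j ∈ m.erase i, Function.update x i v j = x j := by
    intro j hj
    have : j ≠ i := (hnd.mem_erase_iff.1 hj).1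
    simp [Function.update, this]
  have h1 : Multiset.map x m = x i ::ₘ Multiset.map x (m.erase i) := by
    conv_lhs => rw [← Multiset.cons_erase him]
    rw [Multiset.map_cons]
  have h2 : (Multiset.map x m).erase (x i) = Multiset.map x (m.erase i) := by
    rw [h1, Multiset.erase_cons_head]
  rw [h2]
  conv_lhs => rw [← Multiset.cons_erase him]
  rw [Multiset.map_cons, Function.update_self, Multiset.map_congr rfl hkey]

lemma mle_update_left {n : ℕ} (x : Fin n → ℕ) (i : Fin n) (v : ℕ) (h : v ≤ x i) :
    MLe (msetOf (Function.update x i v)) (msetOf x) := by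
  rw [msetOf_update]
  conv_rhs => rw [← Multiset.cons_erase (mem_msetOf x i)]
  exact mle_cons_le h _

lemma mle_update_right {n : ℕ} (y : Fin n → ℕ) (i : Fin n) (v : ℕ) (h : y i ≤ v) :
    MLe (msetOf y) (msetOf (Function.update y i v)) := by
  rw [msetOf_update]
  conv_lhs => rw [← Multiset.cons_erase (mem_msetOf y i)]
  exact mle_cons_le h _

/-- Theorem 1 of the paper: `X ≤ₘ Y` is GAC iff for all `i < n`,
`max(DX i)` and `min(DY i)` are consistent. -/
theorem stmt0 (n : ℕ) (hn : 1 ≤ n) (DX DY : Fin n → Finset ℕ)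
    (hDX : ∀ i, (DX i).Nonempty) (hDY : ∀ i, (DY i).Nonempty) :
    GACLe DX DY ↔
      ∀ i : Fin n, ConsX DX DY i ((DX i).max' (hDX i)) ∧
        ConsY DX DY i ((DY i).min' (hDY i)) := by
  constructor
  · intro h i
    exact ⟨h.1 i _ ((DX i).max'_mem (hDX i)), h.2 i _ ((DY i).min'_mem (hDY i))⟩
  · intro h
    constructor
    · intro i v hv
      obtain ⟨x, y, ⟨hx, hy, hle⟩, hxi⟩ := (h i).1
      refine ⟨Function.update x i v, y, ⟨?_, hy, ?_⟩, Function.update_self i v x⟩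
      · intro j
        rcases eq_or_ne j i with rfl | hji
        · simpa using hv
        · simpa [Function.update_of_ne hji] using hx j
      · exact mle_trans (mle_update_left x i v (hxi ▸ Finset.le_max' _ _ hv)) hle
    · intro i v hv
      obtain ⟨x, y, ⟨hx, hy, hle⟩, hyi⟩ := (h i).2
      refine ⟨x, Function.update y i v, ⟨hx, ?_, ?_⟩, Function.update_self i v y⟩
      · intro j
        rcases eq_or_ne j i with rfl | hji
        · simpa using hv
        · simpa [Function.update_of_ne hji] using hy j
      · exact mle_trans hle (mle_update_right y i v (hyi ▸ Finset.min'_le _ _ hv))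

end MsetPaper
end

section
/- For finite multisets x and y of natural numbers of the same cardinality, the following are equivalent: (i) either the multiplicity functions of x and y are equal, or there exists a natural number a such that the multiplicity of a in x is strictly less than the multiplicity of a in y and, for every natural number b > a, the multiplicities of b in x and in y are equal; (ii) the list of elements of x sorted in non-increasing order is ≤_lex the list of elements of y sorted in non-increasing order. -/
/-!
Both orders are decided at the largest elements. Adding the same element to two multisets does
not change how their multiplicities compare, and adding it to the front of two lists does not
change their lexicographic comparison; if instead the maxima differ, the larger maximum wins on
both sides. Induction along the sorted lists then gives the equivalence.
-/

namespace MsetPaper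

def sortDesc (s : Multiset ℕ) : List ℕ := (s.sort (· ≤ ·)).reverse

def LexLe (l₁ l₂ : List ℕ) : Prop := l₁ = l₂ ∨ List.Lex (· < ·) l₁ l₂

section CountLex

variable {α : Type*} [LinearOrder α]

def CountLexLe (x y : Multiset α) : Prop :=
  (∀ a, x.count a = y.count a) ∨ ∃ a, x.count a < y.count a ∧ ∀ b, a < b → x.count b = y.count b

theorem countLexLe_cons_cons_iff (a : α) (x y : Multiset α) :
    CountLexLe (a ::ₘ x) (a ::ₘ y) ↔ CountLexLe x y := by
  simp only [CountLexLe, Multiset.count_cons, Nat.add_right_cancel_iff, Nat.add_lt_add_iff_right]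

theorem countLexLe_cons_of_lt {a b : α} {x y : Multiset α} (hx : ∀ c ∈ x, c ≤ a)
    (hy : ∀ c ∈ y, c ≤ b) (hab : a < b) : CountLexLe (a ::ₘ x) (b ::ₘ y) := by
  have count_x : ∀ c, b ≤ c → (a ::ₘ x).count c = 0 := fun c hc =>
    Multiset.count_eq_zero.mpr fun hmem => by
      rcases Multiset.mem_cons.mp hmem with rfl | hmem
      · exact hc.not_gt hab
      · exact hc.not_gt ((hx c hmem).trans_lt hab)
  have count_y : ∀ c, b < c → (b ::ₘ y).count c = 0 := fun c hc =>
    Multiset.count_eq_zero.mpr fun hmem => by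
      rcases Multiset.mem_cons.mp hmem with rfl | hmem
      · exact hc.false
      · exact hc.not_ge (hy c hmem)
  refine Or.inr ⟨b, ?_, fun c hc => by rw [count_x c hc.le, count_y c hc]⟩
  rw [count_x b le_rfl]
  exact Multiset.count_pos.mpr (Multiset.mem_cons_self b y)

theorem not_countLexLe_cons_of_lt {a b : α} {x y : Multiset α} (hy : ∀ c ∈ y, c ≤ b)
    (hba : b < a) : ¬ CountLexLe (a ::ₘ x) (b ::ₘ y) := by
  have count_y : ∀ c, (b ::ₘ y).count c ≠ 0 → c < a := fun c hc => by
    rcases Multiset.mem_cons.mp (Multiset.count_ne_zero.mp hc) with rfl | hmem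
    · exact hba
    · exact (hy c hmem).trans_lt hba
  have count_x : (a ::ₘ x).count a ≠ 0 :=
    Multiset.count_ne_zero.mpr (Multiset.mem_cons_self a x)
  rintro (h | ⟨c, hc, h⟩)
  · exact (count_y a (h a ▸ count_x)).false
  · exact (count_y a (h a (count_y c (by omega)) ▸ count_x)).false

end CountLex

theorem lexLe_cons_cons_iff (a : ℕ) (l m : List ℕ) : LexLe (a :: l) (a :: m) ↔ LexLe l m := by
  simp only [LexLe, List.cons.injEq, true_and, List.lex_cons_iff]

theorem lexLe_cons_of_lt {a b : ℕ} (h : a < b) (l m : List ℕ) : LexLe (a :: l) (b :: m) :=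
  Or.inr (List.Lex.rel h)

theorem not_lexLe_cons_of_lt {a b : ℕ} (h : b < a) (l m : List ℕ) : ¬ LexLe (a :: l) (b :: m) := by
  rintro (heq | hlex)
  · exact h.ne (List.cons.inj heq).1.symm
  · cases hlex with
    | rel h' => exact h.not_gt h'
    | cons => exact h.false

theorem countLexLe_coe_iff_lexLe :
    ∀ {l₁ l₂ : List ℕ}, l₁.Pairwise (· ≥ ·) → l₂.Pairwise (· ≥ ·) → l₁.length = l₂.length →
      (CountLexLe (l₁ : Multiset ℕ) l₂ ↔ LexLe l₁ l₂)
  | [], [], _, _, _ => by simp [CountLexLe, LexLe]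
  | a :: t, b :: u, h₁, h₂, hlen => by
    rw [List.pairwise_cons] at h₁ h₂
    rw [← Multiset.cons_coe, ← Multiset.cons_coe]
    rcases lt_trichotomy a b with hab | rfl | hba
    · exact iff_of_true (countLexLe_cons_of_lt h₁.1 h₂.1 hab) (lexLe_cons_of_lt hab t u)
    · rw [countLexLe_cons_cons_iff, lexLe_cons_cons_iff]
      exact countLexLe_coe_iff_lexLe h₁.2 h₂.2 (Nat.succ_injective hlen)
    · exact iff_of_false (not_countLexLe_cons_of_lt h₂.1 hba) (not_lexLe_cons_of_lt hba t u)

theorem sortDesc_pairwise (s : Multiset ℕ) : (sortDesc s).Pairwise (· ≥ ·) :=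
  List.pairwise_reverse.mpr (Multiset.pairwise_sort s (· ≤ ·))

theorem coe_sortDesc (s : Multiset ℕ) : (sortDesc s : Multiset ℕ) = s := by
  rw [sortDesc, Multiset.coe_reverse, Multiset.sort_eq]

/-- For multisets of equal cardinality: the occurrence vectors are lexicographically
ordered iff the non-increasingly sorted lists are lexicographically ordered. -/
theorem stmt5 (x y : Multiset ℕ) (h : Multiset.card x = Multiset.card y) :
    ((∀ a : ℕ, x.count a = y.count a) ∨
        ∃ a : ℕ, x.count a < y.count a ∧ ∀ b : ℕ, a < b → x.count b = y.count b) ↔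
      LexLe (sortDesc x) (sortDesc y) := by
  have hlen : (sortDesc x).length = (sortDesc y).length := by
    rw [← Multiset.coe_card, ← Multiset.coe_card, coe_sortDesc, coe_sortDesc, h]
  have key := countLexLe_coe_iff_lexLe (sortDesc_pairwise x) (sortDesc_pairwise y) hlen
  rwa [coe_sortDesc, coe_sortDesc] at key

end MsetPaper
end

section
/- If i < n satisfies max(DX i) < α, then the value max(DX i) is consistent for X_i (hence every value of DX i is consistent). -/
namespace MsetPaper

/-- `cx DX hDX v` counts the indices `i` with `min (DX i) = v`
(the occurrence vector of `floor(X)`). -/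
def cx {n : ℕ} (DX : Fin n → Finset ℕ) (hDX : ∀ i, (DX i).Nonempty) (v : ℕ) : ℕ :=
  (Finset.univ.filter fun i => (DX i).min' (hDX i) = v).card

/-- `cy DY hDY v` counts the indices `i` with `max (DY i) = v`
(the occurrence vector of `ceiling(Y)`). -/
def cy {n : ℕ} (DY : Fin n → Finset ℕ) (hDY : ∀ i, (DY i).Nonempty) (v : ℕ) : ℕ :=
  (Finset.univ.filter fun i => (DY i).max' (hDY i) = v).card

lemma count_msetOf {n : ℕ} (x : Fin n → ℕ) (v : ℕ) :
    (msetOf x).count v = (Finset.univ.filter fun j => x j = v).card := by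
  have h : msetOf x = Multiset.map x Finset.univ.val := by
    simp [msetOf, List.ofFn_eq_map]
  rw [h, Multiset.count_map]
  rw [show (Finset.univ.filter fun j => x j = v).card
      = Multiset.card (Multiset.filter (fun j => x j = v) Finset.univ.val) from rfl]
  congr 1
  exact Multiset.filter_congr (fun a _ => eq_comm)

lemma mlt_of_counts (α : ℕ) (s : Multiset ℕ) :
    ∀ t : Multiset ℕ, (∀ b, α < b → s.count b = t.count b) → s.count α < t.count α →
      MLt s t := by
  induction s using Multiset.strongInductionOn with
  | _ s ih =>
  intro t hgt hα
  have ht : t ≠ 0 := by rintro rfl; simp at hα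
  rcases eq_or_ne s 0 with rfl | hs
  · exact MLt.empty ht
  have hαt : α ∈ t := Multiset.count_pos.mp (lt_of_le_of_lt (Nat.zero_le _) hα)
  have hαle : α ≤ mmax t := Multiset.le_sup hαt
  have hle : mmax s ≤ mmax t := by
    have hm := mmax_mem hs
    rcases le_or_gt (mmax s) α with h | h
    · exact h.trans hαle
    · have h1 : s.count (mmax s) = t.count (mmax s) := hgt _ h
      have h2 : mmax s ∈ t := Multiset.count_pos.mp (h1 ▸ Multiset.count_pos.mpr hm)
      exact Multiset.le_sup h2
  rcases lt_or_eq_of_le hle with h | h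
  · exact MLt.maxLt hs ht h
  refine MLt.maxEq hs ht h ?_
  have hms : mmax s ∈ s := mmax_mem hs
  have hmα : α ≤ mmax s := h ▸ hαle
  rw [← h]
  apply ih (s.erase (mmax s)) (Multiset.erase_lt.mpr hms)
  · intro b hb
    rcases eq_or_ne b (mmax s) with rfl | hbm
    · rw [Multiset.count_erase_self, Multiset.count_erase_self, hgt _ hb]
    · rw [Multiset.count_erase_of_ne hbm, Multiset.count_erase_of_ne hbm, hgt _ hb]
  · rcases eq_or_lt_of_le hmα with hEq | hGt
    · have h1 : 1 ≤ s.count α := by rw [hEq]; exact Multiset.count_pos.mpr hms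
      rw [← hEq, Multiset.count_erase_self, Multiset.count_erase_self]
      omega
    · have hne : α ≠ mmax s := by omega
      rw [Multiset.count_erase_of_ne hne, Multiset.count_erase_of_ne hne]
      exact hα

/-- If `max(DX i) < α` then `max(DX i)` is consistent (hence every value of `DX i` is). -/
theorem stmt9 (n : ℕ) (hn : 1 ≤ n) (DX DY : Fin n → Finset ℕ)
    (hDX : ∀ i, (DX i).Nonempty) (hDY : ∀ i, (DY i).Nonempty)
    (α : ℕ)
    (hα1 : cx DX hDX α < cy DY hDY α)
    (hα2 : ∀ b : ℕ, α < b → cx DX hDX b = cy DY hDY b)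
    (i : Fin n) (hi : (DX i).max' (hDX i) < α) :
    ConsX DX DY i ((DX i).max' (hDX i)) ∧ ∀ v ∈ DX i, ConsX DX DY i v := by
  have hmain : ∀ v ∈ DX i, ConsX DX DY i v := by
    intro v hv
    have hvα : v < α := lt_of_le_of_lt (Finset.le_max' _ _ hv) hi
    set x : Fin n → ℕ := Function.update (fun j => (DX j).min' (hDX j)) i v with hx
    set y : Fin n → ℕ := fun j => (DY j).max' (hDY j) with hy
    have hy_count : ∀ w, (msetOf y).count w = cy DY hDY w := by
      intro w; rw [count_msetOf, cy]
    have hx_count : ∀ w, α ≤ w → (msetOf x).count w = cx DX hDX w := by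
      intro w hw
      rw [count_msetOf, cx]
      congr 1
      apply Finset.filter_congr
      intro j _
      rcases eq_or_ne j i with rfl | hj
      · have hmin : (DX j).min' (hDX j) ≤ (DX j).max' (hDX j) :=
          Finset.min'_le _ _ (Finset.max'_mem _ _)
        have hxj : x j = v := by rw [hx]; simp
        constructor
        · intro hxe; omega
        · intro hme; omega
      · rw [hx]; simp [Function.update_of_ne hj]
    refine ⟨x, y, ⟨?_, ?_, ?_⟩, ?_⟩
    · intro j
      rcases eq_or_ne j i with rfl | hj
      · simpa [hx] using hv
      · rw [hx]; simpa [Function.update_of_ne hj] using Finset.min'_mem _ _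
    · intro j; exact Finset.max'_mem _ _
    · left
      apply mlt_of_counts α
      · intro b hb
        rw [hx_count b (le_of_lt hb), hy_count]; exact hα2 b hb
      · rw [hx_count α le_rfl, hy_count]; exact hα1
    · rw [hx]; simp
  exact ⟨hmain _ (Finset.max'_mem _ _), hmain⟩

end MsetPaper
end

section
/- If i < n satisfies min(DX i) ≥ α, then every value v ∈ DX i with v > min(DX i) is inconsistent (i.e., not consistent). -/
namespace MsetPaper

lemma countP_zero_of_gt {s : Multiset ℕ} {t : ℕ} (h : mmax s < t) :
    Multiset.countP (fun e => t ≤ e) s = 0 := by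
  rw [Multiset.countP_eq_zero]
  intro a ha
  have h2 : a ≤ s.sup := Multiset.le_sup ha
  have h3 : s.sup < t := h
  omega

lemma countP_pos_self {s : Multiset ℕ} (h : s ≠ 0) :
    0 < Multiset.countP (fun e => mmax s ≤ e) s :=
  Multiset.countP_pos.mpr ⟨mmax s, mmax_mem h, le_refl _⟩

lemma countP_erase {s : Multiset ℕ} {a : ℕ} (h : a ∈ s) (p : ℕ → Prop) [DecidablePred p] :
    Multiset.countP p s = Multiset.countP p (s.erase a) + if p a then 1 else 0 := by
  conv_lhs => rw [← Multiset.cons_erase h]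
  rw [Multiset.countP_cons]

lemma mlt_countP {A B : Multiset ℕ} (h : MLt A B) :
    ∃ w, (Multiset.countP (fun e => w ≤ e) A < Multiset.countP (fun e => w ≤ e) B) ∧
      ∀ u, w < u →
        Multiset.countP (fun e => u ≤ e) A = Multiset.countP (fun e => u ≤ e) B := by
  induction h with
  | @empty y hy =>
    refine ⟨mmax y, ?_, ?_⟩
    · simpa using countP_pos_self hy
    · intro u hu
      simp [countP_zero_of_gt hu]
  | @maxLt x y hx hy hlt =>
    refine ⟨mmax y, ?_, ?_⟩
    · have h1 := countP_zero_of_gt (s := x) (t := mmax y) hlt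
      have h2 := countP_pos_self hy
      omega
    · intro u hu
      rw [countP_zero_of_gt (lt_trans hlt hu), countP_zero_of_gt hu]
  | @maxEq x y hx hy heq hrec ih =>
    obtain ⟨w, hw1, hw2⟩ := ih
    have hex := countP_erase (mmax_mem hx)
    have hey := countP_erase (mmax_mem hy)
    rw [← heq] at hw1 hw2
    refine ⟨w, ?_, ?_⟩
    · rw [hex (fun e => w ≤ e), hey (fun e => w ≤ e), ← heq]
      omega
    · intro u hu
      rw [hex (fun e => u ≤ e), hey (fun e => u ≤ e), ← heq, hw2 u hu]

/-- threshold count for a vector -/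
def Ncnt {n : ℕ} (t : ℕ) (f : Fin n → ℕ) : ℕ :=
  (Finset.univ.filter fun j => t ≤ f j).card

lemma countP_msetOf {n : ℕ} (p : ℕ → Prop) [DecidablePred p] (f : Fin n → ℕ) :
    Multiset.countP p (msetOf f) = (Finset.univ.filter fun j => p (f j)).card := by
  rw [msetOf, ← Fin.univ_val_map, Multiset.countP_map, Finset.card, Finset.filter_val]

lemma Ncnt_mono {n : ℕ} {f g : Fin n → ℕ} (h : ∀ j, f j ≤ g j) (t : ℕ) :
    Ncnt t f ≤ Ncnt t g := by
  apply Finset.card_le_card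
  intro j hj
  simp only [Finset.mem_filter, Finset.mem_univ, true_and] at *
  exact le_trans hj (h j)

lemma Ncnt_split {n : ℕ} (t : ℕ) (f : Fin n → ℕ) :
    Ncnt t f = Ncnt (t + 1) f + (Finset.univ.filter fun j => f j = t).card := by
  rw [Ncnt, Ncnt]
  rw [show (Finset.univ.filter fun j => t ≤ f j)
      = (Finset.univ.filter fun j => t + 1 ≤ f j) ∪ (Finset.univ.filter fun j => f j = t) by
    ext j; simp only [Finset.mem_filter, Finset.mem_union, Finset.mem_univ, true_and]; omega]
  apply Finset.card_union_of_disjoint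
  rw [Finset.disjoint_left]
  intro j h1 h2
  simp only [Finset.mem_filter, Finset.mem_univ, true_and] at h1 h2
  omega

/-- If `min(DX i) ≥ α` then every value of `DX i` above `min(DX i)` is inconsistent. -/
theorem stmt10 (n : ℕ) (hn : 1 ≤ n) (DX DY : Fin n → Finset ℕ)
    (hDX : ∀ i, (DX i).Nonempty) (hDY : ∀ i, (DY i).Nonempty)
    (α : ℕ)
    (hα1 : cx DX hDX α < cy DY hDY α)
    (hα2 : ∀ b : ℕ, α < b → cx DX hDX b = cy DY hDY b)
    (i : Fin n) (hi : α ≤ (DX i).min' (hDX i)) :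
    ∀ v ∈ DX i, (DX i).min' (hDX i) < v → ¬ ConsX DX DY i v := by
  intro v hv hlt hcons
  obtain ⟨x, y, ⟨hx, hy, hle⟩, hxi⟩ := hcons
  have hαv : α < v := lt_of_le_of_lt hi hlt
  set m : Fin n → ℕ := fun j => (DX j).min' (hDX j) with hm
  set M : Fin n → ℕ := fun j => (DY j).max' (hDY j) with hM
  have hmx : ∀ j, m j ≤ x j := fun j => Finset.min'_le _ _ (hx j)
  have hyM : ∀ j, y j ≤ M j := fun j => Finset.le_max' _ _ (hy j)
  set B : ℕ := (Finset.univ.sup fun j => max (m j) (M j)) + 1 with hB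
  have hbd : ∀ j, m j < B ∧ M j < B := by
    intro j
    have h1 : max (m j) (M j) ≤ Finset.univ.sup fun j => max (m j) (M j) :=
      Finset.le_sup (f := fun j => max (m j) (M j)) (Finset.mem_univ j)
    have h2 := le_max_left (m j) (M j)
    have h3 := le_max_right (m j) (M j)
    omega
  have hzero : ∀ (t : ℕ) (f : Fin n → ℕ), (∀ j, f j < t) → Ncnt t f = 0 := by
    intro t f hf
    rw [Ncnt, Finset.card_eq_zero, Finset.filter_eq_empty_iff]
    intro j _
    have := hf j
    omega
  -- counts above α agree between floor(X) and ceiling(Y)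
  have key : ∀ d t, α < t → B ≤ t + d → Ncnt t m = Ncnt t M := by
    intro d
    induction d with
    | zero =>
      intro t ht hBt
      rw [hzero t m (fun j => by have := (hbd j).1; omega),
        hzero t M (fun j => by have := (hbd j).2; omega)]
    | succ d ih =>
      intro t ht hBt
      rcases le_or_gt B t with hc | hc
      · rw [hzero t m (fun j => by have := (hbd j).1; omega),
          hzero t M (fun j => by have := (hbd j).2; omega)]
      · rw [Ncnt_split t m, Ncnt_split t M, ih (t + 1) (by omega) (by omega)]
        have hcxy := hα2 t ht
        simp only [cx, cy] at hcxy
        simp only [hm, hM]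
        omega
  have keyt : ∀ t, α < t → Ncnt t m = Ncnt t M := fun t ht => key B t ht (by omega)
  -- strict inequality at threshold v
  have hNv : Ncnt v m < Ncnt v x := by
    apply Finset.card_lt_card
    have hsub : (Finset.univ.filter fun j => v ≤ m j) ⊆ (Finset.univ.filter fun j => v ≤ x j) := by
      intro j hj
      simp only [Finset.mem_filter, Finset.mem_univ, true_and] at *
      exact le_trans hj (hmx j)
    rw [Finset.ssubset_iff_of_subset hsub]
    refine ⟨i, ?_, ?_⟩
    · simp only [Finset.mem_filter, Finset.mem_univ, true_and]
      omega
    · simp only [Finset.mem_filter, Finset.mem_univ, true_and]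
      have : m i = (DX i).min' (hDX i) := rfl
      omega
  rcases hle with hlt' | heq
  · obtain ⟨w, hw1, hw2⟩ := mlt_countP hlt'
    rw [countP_msetOf, countP_msetOf] at hw1
    have hw1' : Ncnt w x < Ncnt w y := hw1
    have hw2' : ∀ u, w < u → Ncnt u x = Ncnt u y := by
      intro u hu
      have := hw2 u hu
      rw [countP_msetOf, countP_msetOf] at this
      exact this
    rcases lt_trichotomy w v with h | h | h
    · have h1 := hw2' v h
      have h2 := keyt v hαv
      have h3 := Ncnt_mono hyM v
      omega
    · rw [h] at hw1'
      have h2 := keyt v hαv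
      have h3 := Ncnt_mono hyM v
      omega
    · have h1 := Ncnt_mono hmx w
      have h2 := keyt w (by omega)
      have h3 := Ncnt_mono hyM w
      omega
  · have h1 : Ncnt v x = Ncnt v y := by
      rw [Ncnt, Ncnt, ← countP_msetOf, ← countP_msetOf, heq]
    have h2 := keyt v hαv
    have h3 := Ncnt_mono hyM v
    omega


end MsetPaper
end

section
/- (a) For every family of nonempty finite domains D k j (k < n, j < m), if the constraint X_i ≤_m X_j is GAC for all i < j < n, then the constraint X_i ≤_m X_{i+1} is GAC for all i < n − 1. (b) Moreover this is strict: there exist n, m and a family of nonempty finite domains D k j such that X_i ≤_m X_{i+1} is GAC for all i < n − 1, yet X_i ≤_m X_j is not GAC for some i < j < n. -/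
namespace MsetPaper

/-- `(x, y)` is a satisfying assignment for `X_k ≤ₘ X_l` with row domains `Dk`, `Dl`. -/
def SatPair {m : ℕ} (Dk Dl : Fin m → Finset ℕ) (x y : Fin m → ℕ) : Prop :=
  (∀ j, x j ∈ Dk j) ∧ (∀ j, y j ∈ Dl j) ∧ MLe (msetOf x) (msetOf y)

/-- The pairwise constraint `X_k ≤ₘ X_l` is generalised arc-consistent. -/
def GACPair {m : ℕ} (Dk Dl : Fin m → Finset ℕ) : Prop :=
  (∀ j, ∀ v ∈ Dk j, ∃ x y, SatPair Dk Dl x y ∧ x j = v) ∧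
  (∀ j, ∀ v ∈ Dl j, ∃ x y, SatPair Dk Dl x y ∧ y j = v)


lemma mlt_inv {x y : Multiset ℕ} (h : MLt x y) :
    x = 0 ∨ mmax x < mmax y ∨ mmax x = mmax y := by
  cases h with
  | empty h => left; rfl
  | maxLt h1 h2 h3 => right; left; exact h3
  | maxEq h1 h2 h3 _ => right; right; exact h3

/-- GAC of all pairwise constraints implies GAC of the adjacent ones, and this is strict. -/
theorem stmt17 :
    (∀ (n m : ℕ), 2 ≤ n → 1 ≤ m → ∀ D : Fin n → Fin m → Finset ℕ,
        (∀ k j, (D k j).Nonempty) →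
        (∀ i j : Fin n, i < j → GACPair (D i) (D j)) →
        ∀ (i : ℕ) (h : i + 1 < n),
          GACPair (D ⟨i, Nat.lt_of_succ_lt h⟩) (D ⟨i + 1, h⟩)) ∧
    (∃ (n m : ℕ) (_ : 2 ≤ n) (_ : 1 ≤ m) (D : Fin n → Fin m → Finset ℕ),
        (∀ k j, (D k j).Nonempty) ∧
        (∀ (i : ℕ) (h : i + 1 < n),
          GACPair (D ⟨i, Nat.lt_of_succ_lt h⟩) (D ⟨i + 1, h⟩)) ∧
        ∃ i j : Fin n, i < j ∧ ¬ GACPair (D i) (D j)) := by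
  constructor
  · intro n m hn hm D hne hall i h
    exact hall ⟨i, Nat.lt_of_succ_lt h⟩ ⟨i + 1, h⟩ (by simp [Fin.lt_def])
  · refine ⟨3, 2, by norm_num, by norm_num,
      ![![{0}, {1}], ![{0,1}, {0,1}], ![{0}, {0,1}]], ?_, ?_, ?_⟩
    · intro k j; fin_cases k <;> fin_cases j <;> decide
    · intro i h
      have hi : i < 2 := by omega
      interval_cases i
      · -- GACPair (D 0) (D 1)
        show GACPair ![({0} : Finset ℕ), {1}] ![({0,1} : Finset ℕ), {0,1}]
        constructor
        · intro j v hv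
          fin_cases j <;> simp at hv <;> subst hv <;>
            exact ⟨![0,1], ![0,1], ⟨by decide, by decide, Or.inr rfl⟩, rfl⟩
        · intro j v hv
          fin_cases j <;> simp at hv <;> rcases hv with rfl | rfl
          · exact ⟨![0,1], ![0,1], ⟨by decide, by decide, Or.inr rfl⟩, rfl⟩
          · exact ⟨![0,1], ![1,0], ⟨by decide, by decide, Or.inr (by decide)⟩, rfl⟩
          · exact ⟨![0,1], ![1,0], ⟨by decide, by decide, Or.inr (by decide)⟩, rfl⟩
          · exact ⟨![0,1], ![0,1], ⟨by decide, by decide, Or.inr rfl⟩, rfl⟩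
      · -- GACPair (D 1) (D 2)
        show GACPair ![({0,1} : Finset ℕ), {0,1}] ![({0} : Finset ℕ), {0,1}]
        constructor
        · intro j v hv
          fin_cases j <;> simp at hv <;> rcases hv with rfl | rfl
          · exact ⟨![0,0], ![0,0], ⟨by decide, by decide, Or.inr rfl⟩, rfl⟩
          · exact ⟨![1,0], ![0,1], ⟨by decide, by decide, Or.inr (by decide)⟩, rfl⟩
          · exact ⟨![0,0], ![0,0], ⟨by decide, by decide, Or.inr rfl⟩, rfl⟩
          · exact ⟨![0,1], ![0,1], ⟨by decide, by decide, Or.inr rfl⟩, rfl⟩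
        · intro j v hv
          fin_cases j <;> simp at hv
          · subst hv
            exact ⟨![0,0], ![0,0], ⟨by decide, by decide, Or.inr rfl⟩, rfl⟩
          · rcases hv with rfl | rfl
            · exact ⟨![0,0], ![0,0], ⟨by decide, by decide, Or.inr rfl⟩, rfl⟩
            · refine ⟨![0,0], ![0,1], ⟨by decide, by decide,
                Or.inl (MLt.maxLt (by decide) (by decide) (by decide))⟩, rfl⟩
    · refine ⟨0, 2, by decide, ?_⟩
      rintro ⟨-, h2⟩
      obtain ⟨x, y, ⟨hx, hy, hle⟩, hyj⟩ := h2 1 0 (by decide)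
      have hx0 : x 0 = 0 := by have := hx 0; simpa using this
      have hx1 : x 1 = 1 := by have := hx 1; simpa using this
      have hy0 : y 0 = 0 := by have := hy 0; simpa using this
      have hmx : msetOf x = ({0, 1} : Multiset ℕ) := by
        show ({x 0, x 1} : Multiset ℕ) = _
        rw [hx0, hx1]
      have hmy : msetOf y = ({0, 0} : Multiset ℕ) := by
        show ({y 0, y 1} : Multiset ℕ) = _
        rw [hy0, hyj]
      rw [hmx, hmy] at hle
      rcases hle with h | h
      · rcases mlt_inv h with h | h | h <;> revert h <;> decide
      · revert h; decide


end MsetPaper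
end

section
/- (a) For every family of nonempty finite domains D k j (k < n, j < m), if the global chain constraint is GAC, then the pairwise constraint X_i ≤_m X_j is GAC for every i < j < n. (b) Moreover this is strict: there exist n, m and a family of nonempty finite domains D k j such that X_i ≤_m X_j is GAC for every i < j < n, yet the global chain constraint is not GAC. -/
namespace MsetPaper

/-- A full assignment `x` satisfies the global chain constraint
`X_0 ≤ₘ X_1 ≤ₘ ⋯ ≤ₘ X_{n-1}` (as a single global constraint over the whole matrix). -/
def SatChain {n m : ℕ} (D : Fin n → Fin m → Finset ℕ) (x : Fin n → Fin m → ℕ) : Prop :=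
  (∀ k j, x k j ∈ D k j) ∧ ∀ i j : Fin n, i < j → MLe (msetOf (x i)) (msetOf (x j))

/-- The global chain constraint is generalised arc-consistent. -/
def GACChain {n m : ℕ} (D : Fin n → Fin m → Finset ℕ) : Prop :=
  ∀ k j, ∀ v ∈ D k j, ∃ x, SatChain D x ∧ x k j = v


lemma msetOf_pair (x : Fin 2 → ℕ) : msetOf x = {x 0, x 1} := by
  simp [msetOf, List.ofFn_succ]; rfl

lemma not_mlt_of_max (x y : Multiset ℕ) (hx : x ≠ 0)
    (h1 : ¬ mmax x < mmax y) (h2 : mmax x ≠ mmax y) : ¬ MLt x y := by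
  intro h
  cases h <;> simp_all

/-- GAC of the global chain constraint implies GAC of every pairwise constraint;
strictly so. -/
theorem stmt19 :
    (∀ (n m : ℕ), 2 ≤ n → 1 ≤ m → ∀ D : Fin n → Fin m → Finset ℕ,
        (∀ k j, (D k j).Nonempty) →
        GACChain D →
        ∀ i j : Fin n, i < j → GACPair (D i) (D j)) ∧
    (∃ (n m : ℕ) (_ : 2 ≤ n) (_ : 1 ≤ m) (D : Fin n → Fin m → Finset ℕ),
        (∀ k j, (D k j).Nonempty) ∧
        (∀ i j : Fin n, i < j → GACPair (D i) (D j)) ∧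
        ¬ GACChain D) := by
  constructor
  · intro n m hn hm D hne hGAC i j hij
    constructor
    · intro j0 v hv
      obtain ⟨x, ⟨hdom, hord⟩, hx⟩ := hGAC i j0 v hv
      exact ⟨x i, x j, ⟨fun j' => hdom i j', fun j' => hdom j j', hord i j hij⟩, hx⟩
    · intro j0 v hv
      obtain ⟨x, ⟨hdom, hord⟩, hx⟩ := hGAC j j0 v hv
      exact ⟨x i, x j, ⟨fun j' => hdom i j', fun j' => hdom j j', hord i j hij⟩, hx⟩
  · refine ⟨3, 2, by norm_num, by norm_num,
      ![![{0}, {1}], ![{0,2}, {0,2}], ![{0}, {1,2}]], ?_, ?_, ?_⟩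
    · decide
    · -- pairwise GAC
      have hle01 : MLe (msetOf ![0,1]) (msetOf ![0,2]) :=
        Or.inl (MLt.maxLt (by decide) (by decide) (by decide))
      have hle01' : MLe (msetOf ![0,1]) (msetOf ![2,0]) :=
        Or.inl (MLt.maxLt (by decide) (by decide) (by decide))
      have hle00 : MLe (msetOf ![0,0]) (msetOf ![0,1]) :=
        Or.inl (MLt.maxLt (by decide) (by decide) (by decide))
      have heq : MLe (msetOf ![0,1]) (msetOf ![0,1]) := Or.inr rfl
      have heq2 : MLe (msetOf ![0,2]) (msetOf ![0,2]) := Or.inr rfl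
      have heq3 : MLe (msetOf ![2,0]) (msetOf ![0,2]) := Or.inr (by decide)
      intro i j hij
      fin_cases i <;> fin_cases j <;> first
        | exact absurd hij (by decide)
        | (constructor <;> intro j0 v hv <;> fin_cases j0 <;>
            fin_cases hv <;> first
            | exact ⟨![0,1], ![0,2], ⟨by decide, by decide, hle01⟩, rfl⟩
            | exact ⟨![0,1], ![2,0], ⟨by decide, by decide, hle01'⟩, rfl⟩
            | exact ⟨![0,0], ![0,1], ⟨by decide, by decide, hle00⟩, rfl⟩
            | exact ⟨![0,1], ![0,1], ⟨by decide, by decide, heq⟩, rfl⟩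
            | exact ⟨![0,2], ![0,2], ⟨by decide, by decide, heq2⟩, rfl⟩
            | exact ⟨![2,0], ![0,2], ⟨by decide, by decide, heq3⟩, rfl⟩)
    · -- not chain GAC
      intro h
      obtain ⟨x, ⟨hdom, hord⟩, hx21⟩ := h 2 1 1 (by decide)
      have h00 : x 0 0 = 0 := by simpa using hdom 0 0
      have h01 : x 0 1 = 1 := by simpa using hdom 0 1
      have h20 : x 2 0 = 0 := by simpa using hdom 2 0
      have h10 : x 1 0 = 0 ∨ x 1 0 = 2 := by simpa using hdom 1 0
      have h11 : x 1 1 = 0 ∨ x 1 1 = 2 := by simpa using hdom 1 1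
      have hr0 : msetOf (x 0) = ({0,1} : Multiset ℕ) := by
        rw [msetOf_pair, h00, h01]
      have hr2 : msetOf (x 2) = ({0,1} : Multiset ℕ) := by
        rw [msetOf_pair, h20, hx21]
      have hA : MLe ({0,1} : Multiset ℕ) (msetOf (x 1)) := by
        have := hord 0 1 (by decide); rwa [hr0] at this
      have hB : MLe (msetOf (x 1)) ({0,1} : Multiset ℕ) := by
        have := hord 1 2 (by decide); rwa [hr2] at this
      have hr1 : msetOf (x 1) = {x 1 0, x 1 1} := msetOf_pair (x 1)
      rcases h10 with e0 | e0 <;> rcases h11 with e1 | e1 <;>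
        rw [hr1, e0, e1] at hA hB <;>
        first
        | exact hA.elim
            (fun hA => not_mlt_of_max _ _ (by decide) (by decide) (by decide) hA)
            (fun hA => absurd hA (by decide))
        | exact hB.elim
            (fun hB => not_mlt_of_max _ _ (by decide) (by decide) (by decide) hB)
            (fun hB => absurd hB (by decide))

end MsetPaper
end
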